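/- arXiv:2104.07710 — 2 statements merged into one kernel-verified Lean document; each statement's English description precedes it below -/
import Mathlib

section
/- Let P and Q be finite multisets of points in ℝ² (persistence diagrams above the diagonal). Let P̂ = P ∪ π(Q) and Q̂ = Q ∪ π(P), where π projects to the diagonal. Then the optimal transport (1-Wasserstein) distance between the uniform discrete measures induced by P̂ and Q̂ (under the Euclidean metric) is at most 2 times the 1-Wasserstein distance between the persistence diagrams P and Q, where the latter allows points to be matched to their diagonal projections. -/
noncomputable section

/-- Points in the plane with the Euclidean norm. -/
abbrev Pt := EuclideanSpace ℝ (Fin 2)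

/-- Orthogonal projection onto the diagonal line `y = x`. -/
def proj (p : Pt) : Pt := WithLp.toLp 2 (fun _ => (p 0 + p 1) / 2)

/-- An augmented matching between two indexed multisets of points (of sizes `m`, `n`):
each left point is either matched to a right point (injectively) or left unmatched, in
which case it is matched to its diagonal projection; right points not in the image are
likewise matched to their diagonal projections. -/
structure AugMatching (m n : ℕ) where
  σ : Fin m → Option (Fin n)
  inj : ∀ i i' j, σ i = some j → σ i' = some j → i = i'

open Classical in
/-- The total Euclidean cost of an augmented matching. -/
def matchCost {m n : ℕ} (P : Fin m → Pt) (Q : Fin n → Pt) (M : AugMatching m n) : ℝ :=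
  (∑ i, (M.σ i).elim (dist (P i) (proj (P i))) (fun j => dist (P i) (Q j))) +
    ∑ j, if ∃ i, M.σ i = some j then 0 else dist (Q j) (proj (Q j))

/-- The 1-Wasserstein distance between two persistence diagrams: the infimum of the
cost over all augmented matchings. -/
def dW {m n : ℕ} (P : Fin m → Pt) (Q : Fin n → Pt) : ℝ :=
  sInf {c | ∃ M : AugMatching m n, matchCost P Q M = c}

/-- A coupling between two uniform unit-mass discrete measures indexed by `ι`. -/
def IsCoupling {ι : Type} [Fintype ι] (τ : ι → ι → ℝ) : Prop :=
  (∀ i j, 0 ≤ τ i j) ∧ (∀ i, ∑ j, τ i j = 1) ∧ (∀ j, ∑ i, τ i j = 1)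

/-- The optimal transport (1-Wasserstein) distance between the uniform unit-mass
discrete measures induced by two indexed families of points, under the Euclidean metric. -/
def dOT {ι : Type} [Fintype ι] (A B : ι → Pt) : ℝ :=
  sInf {c | ∃ τ : ι → ι → ℝ, IsCoupling τ ∧ (∑ i, ∑ j, τ i j * dist (A i) (B j)) = c}

/-!
An augmented matching `M` induces a bijection `P̂ → Q̂`, which on the common index set
`Fin m ⊕ Fin n` is an involution: a matched pair `(P i, Q j)` gives the edges `P i → Q j` and
`π(Q j) → π(P i)`, and every unmatched point goes to its own diagonal projection. The
corresponding permutation coupling costs at most `2 · cost(M)`, because each edge is bounded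
by the matching costs of its two endpoints; for `π(Q j) → π(P i)` this is the fact that `π`
is `1`-Lipschitz.
-/

open Finset

lemma dist_proj_le (a b : Pt) : dist (proj a) (proj b) ≤ dist a b := by
  rw [EuclideanSpace.dist_eq, EuclideanSpace.dist_eq]
  apply Real.sqrt_le_sqrt
  simp only [proj, Fin.sum_univ_two, Real.dist_eq, sq_abs, WithLp.ofLp_toLp]
  nlinarith [sq_nonneg ((a 0 - b 0) - (a 1 - b 1))]

section Transport

variable {ι : Type} [Fintype ι]

lemma dOT_le_of_isCoupling (A B : ι → Pt) {τ : ι → ι → ℝ} (hτ : IsCoupling τ) :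
    dOT A B ≤ ∑ i, ∑ j, τ i j * dist (A i) (B j) := by
  refine csInf_le ⟨0, ?_⟩ ⟨τ, hτ, rfl⟩
  rintro c ⟨τ', hτ', rfl⟩
  exact sum_nonneg fun i _ => sum_nonneg fun j _ => mul_nonneg (hτ'.1 i j) dist_nonneg

lemma isCoupling_perm [DecidableEq ι] (f : Equiv.Perm ι) :
    IsCoupling (fun i j => if f i = j then (1 : ℝ) else 0) := by
  refine ⟨fun i j => by positivity, fun i => by simp, fun j => ?_⟩
  simp [← Equiv.eq_symm_apply]

lemma dOT_le_sum_dist_perm [DecidableEq ι] (A B : ι → Pt) (f : Equiv.Perm ι) :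
    dOT A B ≤ ∑ i, dist (A i) (B (f i)) := by
  simpa [ite_mul] using dOT_le_of_isCoupling A B (isCoupling_perm f)

end Transport

namespace AugMatching

variable {m n : ℕ} (M : AugMatching m n)

open Classical in
def partner : Fin m ⊕ Fin n → Fin m ⊕ Fin n
  | .inl i => (M.σ i).elim (.inl i) .inr
  | .inr j => if h : ∃ i, M.σ i = some j then .inl h.choose else .inr j

variable {M}

lemma partner_inl_of_eq_none {i : Fin m} (h : M.σ i = none) : M.partner (.inl i) = .inl i := by
  simp [partner, h]

lemma partner_inl_of_eq_some {i : Fin m} {j : Fin n} (h : M.σ i = some j) :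
    M.partner (.inl i) = .inr j := by
  simp [partner, h]

lemma partner_inr_of_eq_some {i : Fin m} {j : Fin n} (h : M.σ i = some j) :
    M.partner (.inr j) = .inl i := by
  have hex : ∃ i, M.σ i = some j := ⟨i, h⟩
  simp only [partner, dif_pos hex, Sum.inl.injEq]
  exact M.inj _ _ j hex.choose_spec h

lemma partner_inr_of_forall_ne {j : Fin n} (h : ∀ i, M.σ i ≠ some j) :
    M.partner (.inr j) = .inr j := by
  simp [partner, h]

variable (M)

lemma partner_involutive : Function.Involutive M.partner := by
  rintro (i | j)
  · rcases h : M.σ i with _ | j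
    · rw [partner_inl_of_eq_none h, partner_inl_of_eq_none h]
    · rw [partner_inl_of_eq_some h, partner_inr_of_eq_some h]
  · by_cases h : ∃ i, M.σ i = some j
    · obtain ⟨i, hi⟩ := h
      rw [partner_inr_of_eq_some hi, partner_inl_of_eq_some hi]
    · push Not at h
      rw [partner_inr_of_forall_ne h, partner_inr_of_forall_ne h]

open Classical in
def pointCost (P : Fin m → Pt) (Q : Fin n → Pt) : Fin m ⊕ Fin n → ℝ
  | .inl i => (M.σ i).elim (dist (P i) (proj (P i))) (fun j => dist (P i) (Q j))
  | .inr j => if ∃ i, M.σ i = some j then 0 else dist (Q j) (proj (Q j))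

lemma matchCost_eq_sum_pointCost (P : Fin m → Pt) (Q : Fin n → Pt) :
    matchCost P Q M = ∑ k, M.pointCost P Q k := by
  rw [Fintype.sum_sum_type]
  rfl

lemma dist_partner_le (P : Fin m → Pt) (Q : Fin n → Pt) (k : Fin m ⊕ Fin n) :
    dist (Sum.elim P (proj ∘ Q) k) (Sum.elim (proj ∘ P) Q (M.partner k)) ≤
      M.pointCost P Q k + M.pointCost P Q (M.partner k) := by
  rcases k with i | j
  · rcases h : M.σ i with _ | j
    · simp [partner_inl_of_eq_none h, pointCost, h]
    · have hj : ∃ i, M.σ i = some j := ⟨i, h⟩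
      simp [partner_inl_of_eq_some h, pointCost, h, hj]
  · by_cases h : ∃ i, M.σ i = some j
    · obtain ⟨i, hi⟩ := h
      simpa [partner_inr_of_eq_some hi, pointCost, hi, if_pos (⟨i, hi⟩ : ∃ i, M.σ i = some j),
        dist_comm] using dist_proj_le (Q j) (P i)
    · push Not at h
      simp [partner_inr_of_forall_ne h, pointCost, h, dist_comm]

end AugMatching

lemma le_dW {m n : ℕ} {P : Fin m → Pt} {Q : Fin n → Pt} {c : ℝ}
    (h : ∀ M : AugMatching m n, c ≤ matchCost P Q M) : c ≤ dW P Q := by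
  refine le_csInf ⟨_, ⟨fun _ => none, fun _ _ _ h => by cases h⟩, rfl⟩ ?_
  rintro _ ⟨M, rfl⟩
  exact h M

theorem dOT_augmented_le_two_dW_general {m n : ℕ} (P : Fin m → Pt) (Q : Fin n → Pt) :
    dOT (Sum.elim P (proj ∘ Q)) (Sum.elim (proj ∘ P) Q) ≤ 2 * dW P Q := by
  have h : ∀ M : AugMatching m n,
      dOT (Sum.elim P (proj ∘ Q)) (Sum.elim (proj ∘ P) Q) / 2 ≤ matchCost P Q M := by
    intro M
    let f := Function.Involutive.toPerm M.partner M.partner_involutive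
    have hcost := calc
      dOT (Sum.elim P (proj ∘ Q)) (Sum.elim (proj ∘ P) Q)
          ≤ ∑ k, dist (Sum.elim P (proj ∘ Q) k) (Sum.elim (proj ∘ P) Q (f k)) :=
            dOT_le_sum_dist_perm _ _ f
      _ ≤ ∑ k, (M.pointCost P Q k + M.pointCost P Q (f k)) :=
            sum_le_sum fun k _ => M.dist_partner_le P Q k
      _ = 2 * matchCost P Q M := by
            rw [sum_add_distrib, Equiv.sum_comp, M.matchCost_eq_sum_pointCost]
            ring
    linarith
  linarith [le_dW h]

/-- Observation 1: for persistence diagrams `P`, `Q` (finite multisets of points above the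
diagonal), with `P̂ = P ∪ π(Q)` and `Q̂ = Q ∪ π(P)`, the optimal transport distance between
the uniform discrete measures induced by `P̂` and `Q̂` is at most `2 · d_W(P, Q)`. -/
theorem dOT_augmented_le_two_dW {m n : ℕ} (P : Fin m → Pt) (Q : Fin n → Pt)
    (hP : ∀ i, (P i) 0 < (P i) 1) (hQ : ∀ j, (Q j) 0 < (Q j) 1) :
    dOT (Sum.elim P (proj ∘ Q)) (Sum.elim (proj ∘ P) Q) ≤ 2 * dW P Q :=
  dOT_augmented_le_two_dW_general P Q
end
end

section
/- Let T be a rooted tree with nonnegative edge weights, inducing the path metric d_T on its leaves. Let μ and ν be two discrete measures of equal total mass supported on the leaves. The greedy flow — which at each node matches as much of the remaining μ-demand to the remaining ν-demand of that node's subtree as possible, passing the excess |μ̂(v) − ν̂(v)| to the parent — achieves cost equal to Σ_{v} w(e_v)·|μ(subtree(v)) − ν(subtree(v))|, where w(e_v) is the weight of the edge from v to its parent, and this equals the optimal transport cost between μ and ν under the tree metric d_T. -/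
/-!
Write `S_v` for the subtree below `v`. The tree metric is
`d(x, y) = Σ_v w_v |1_{S_v} x - 1_{S_v} y|`, so the cost of a plan is `Σ_v w_v` times the mass it
moves across the edge above `v`, and that mass is at least `|μ(S_v) - ν(S_v)|`.

Conversely, an optimal plan exists by compactness, and it moves mass across each edge of positive
weight in one direction only: if it sent mass `x → y` out of `S_v` and `x' → y'` into it,
exchanging the targets (`x → y'`, `x' → y`) would save at least `2 ε w_v`, because the subtrees
form a laminar family, so that no other edge is crossed more often. Mass moving in one direction
across an edge is exactly `|μ(S_v) - ν(S_v)|`.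
-/

noncomputable section
open Finset Classical

variable {V : Type*} [Fintype V] [DecidableEq V]

/-- Total mass of a discrete measure `μ` in the subtree rooted at `v` (the set of
vertices having `v` as an iterated-parent ancestor, including `v` itself). -/

def subMass (parent : V → V) (μ : V → ℝ) (v : V) : ℝ :=
  ∑ x, if ∃ k, parent^[k] x = v then μ x else 0

/-- The weighted path metric of a rooted tree, where `w v` is the weight of the edge
from `v` to its parent: the edge above `v` lies on the path from `x` to `y` iff exactly
one of `x, y` belongs to the subtree of `v`. -/

def treeDist (root : V) (parent : V → V) (w : V → ℝ) (x y : V) : ℝ :=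
  ∑ v ∈ Finset.univ.erase root,
    w v * |(if ∃ k, parent^[k] x = v then (1 : ℝ) else 0) -
            (if ∃ k, parent^[k] y = v then (1 : ℝ) else 0)|

/-- A transport plan (coupling) between two discrete measures on `V`. -/
def IsPlan (μ ν : V → ℝ) (τ : V → V → ℝ) : Prop :=
  (∀ x y, 0 ≤ τ x y) ∧ (∀ x, ∑ y, τ x y = μ x) ∧ (∀ y, ∑ x, τ x y = ν y)

/-- The optimal transport cost between discrete measures `μ`, `ν` on the leaves of the
tree, under the tree path metric. -/
def treeOT (root : V) (parent : V → V) (w : V → ℝ) (μ ν : V → ℝ) : ℝ :=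
  sInf {c | ∃ τ : V → V → ℝ, IsPlan μ ν τ ∧
    (∑ x, ∑ y, τ x y * treeDist root parent w x y) = c}

/-- `v` is a leaf: it has no children other than (possibly) itself. -/
def IsLeaf (parent : V → V) (v : V) : Prop := ∀ u, parent u = v → u = v

set_option linter.unusedSectionVars false

def subtree (parent : V → V) (v : V) : Set V := {x | ∃ k, parent^[k] x = v}

section Subtree

variable {parent : V → V}

theorem subtree_subset_of_iterate_eq {u v : V} {n : ℕ} (h : parent^[n] u = v) :
    subtree parent u ⊆ subtree parent v := by
  rintro x ⟨k, rfl⟩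
  exact ⟨n + k, by rw [Function.iterate_add_apply, h]⟩

theorem subtree_subset_or_subset {u v x : V} (hu : x ∈ subtree parent u)
    (hv : x ∈ subtree parent v) :
    subtree parent u ⊆ subtree parent v ∨ subtree parent v ⊆ subtree parent u := by
  obtain ⟨j, rfl⟩ := hu
  obtain ⟨k, rfl⟩ := hv
  rcases le_total j k with h | h
  · left
    exact subtree_subset_of_iterate_eq (n := k - j)
      (by rw [← Function.iterate_add_apply, Nat.sub_add_cancel h])
  · right
    exact subtree_subset_of_iterate_eq (n := j - k)
      (by rw [← Function.iterate_add_apply, Nat.sub_add_cancel h])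

end Subtree

theorem abs_indicator_sub_add_abs_indicator_sub_le {s t : Set V}
    (hst : ∀ z ∈ s, z ∈ t → s ⊆ t ∨ t ⊆ s) {x y x' y' : V}
    (hx : x ∈ t) (hy' : y' ∈ t) (hx' : x' ∉ t) (hy : y ∉ t) :
    |s.indicator (1 : V → ℝ) x - s.indicator 1 y'| + |s.indicator 1 x' - s.indicator 1 y| ≤
      |s.indicator 1 x - s.indicator 1 y| + |s.indicator 1 x' - s.indicator 1 y'| := by
  -- Among the sixteen membership patterns only those where `s` separates `{x, y}` from
  -- `{x', y'}` violate the inequality, and laminarity excludes them.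
  have h₁ : ¬(x ∈ s ∧ y ∈ s ∧ x' ∉ s ∧ y' ∉ s) := fun ⟨hxs, hys, _, hy's⟩ ↦
    (hst x hxs hx).elim (fun h ↦ hy (h hys)) (fun h ↦ hy's (h hy'))
  have h₂ : ¬(x ∉ s ∧ y ∉ s ∧ x' ∈ s ∧ y' ∈ s) := fun ⟨hxs, _, hx's, hy's⟩ ↦
    (hst y' hy's hy').elim (fun h ↦ hx' (h hx's)) (fun h ↦ hxs (h hx))
  by_cases x ∈ s <;> by_cases y ∈ s <;> by_cases x' ∈ s <;> by_cases y' ∈ s <;>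
    simp_all

def subtreeCut (parent : V → V) (v : V) (x y : V) : ℝ :=
  (subtree parent v).indicator 1 x - (subtree parent v).indicator 1 y

theorem treeDist_eq_sum_subtreeCut (root : V) (parent : V → V) (w : V → ℝ) (x y : V) :
    treeDist root parent w x y = ∑ v ∈ univ.erase root, w v * |subtreeCut parent v x y| :=
  rfl

theorem treeDist_add_treeDist_add_le {root : V} {parent : V → V} {w : V → ℝ}
    (hw : ∀ v, 0 ≤ w v) {v x y x' y' : V} (hv : v ∈ univ.erase root)
    (hx : x ∈ subtree parent v) (hy' : y' ∈ subtree parent v)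
    (hx' : x' ∉ subtree parent v) (hy : y ∉ subtree parent v) :
    treeDist root parent w x y' + treeDist root parent w x' y + 2 * w v ≤
      treeDist root parent w x y + treeDist root parent w x' y' := by
  simp only [treeDist_eq_sum_subtreeCut, ← sum_add_distrib]
  rw [← add_sum_erase _ _ hv, ← add_sum_erase _ _ hv]
  have hrest : ∑ u ∈ (univ.erase root).erase v,
      (w u * |subtreeCut parent u x y'| + w u * |subtreeCut parent u x' y|) ≤
      ∑ u ∈ (univ.erase root).erase v,
      (w u * |subtreeCut parent u x y| + w u * |subtreeCut parent u x' y'|) := by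
    refine sum_le_sum fun u _ ↦ ?_
    simp only [← mul_add, subtreeCut]
    exact mul_le_mul_of_nonneg_left (abs_indicator_sub_add_abs_indicator_sub_le
      (fun _ hu hv ↦ subtree_subset_or_subset hu hv) hx hy' hx' hy) (hw u)
  have hxy : subtreeCut parent v x y = 1 := by simp [subtreeCut, hx, hy]
  have hx'y' : subtreeCut parent v x' y' = -1 := by simp [subtreeCut, hx', hy']
  have hxy' : subtreeCut parent v x y' = 0 := by simp [subtreeCut, hx, hy']
  have hx'y : subtreeCut parent v x' y = 0 := by simp [subtreeCut, hx', hy]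
  rw [hxy, hx'y', hxy', hx'y]
  norm_num
  linarith

def transportCost (τ c : V → V → ℝ) : ℝ := ∑ x, ∑ y, τ x y * c x y

section TransportCost

variable {μ ν : V → ℝ} {τ : V → V → ℝ}

theorem transportCost_sum_mul {ι : Type*} (s : Finset ι) (a : ι → ℝ) (c : ι → V → V → ℝ) :
    transportCost τ (fun x y ↦ ∑ i ∈ s, a i * c i x y) = ∑ i ∈ s, a i * transportCost τ (c i) := by
  simp only [transportCost, mul_sum]
  refine (sum_congr rfl fun x _ ↦ sum_comm).trans (sum_comm.trans ?_)
  exact sum_congr rfl fun i _ ↦ sum_congr rfl fun x _ ↦ sum_congr rfl fun y _ ↦ by ring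

theorem transportCost_treeDist (root : V) (parent : V → V) (w : V → ℝ) :
    transportCost τ (treeDist root parent w) =
      ∑ v ∈ univ.erase root, w v * transportCost τ (fun x y ↦ |subtreeCut parent v x y|) :=
  transportCost_sum_mul _ _ _

theorem transportCost_congr_of_pos {c c' : V → V → ℝ} (hτ : ∀ x y, 0 ≤ τ x y)
    (h : ∀ x y, 0 < τ x y → c x y = c' x y) : transportCost τ c = transportCost τ c' := by
  refine sum_congr rfl fun x _ ↦ sum_congr rfl fun y _ ↦ ?_
  rcases (hτ x y).eq_or_lt with h0 | hpos
  · simp [← h0]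
  · rw [h x y hpos]

theorem transportCost_neg (c : V → V → ℝ) :
    transportCost τ (fun x y ↦ -c x y) = -transportCost τ c := by
  simp [transportCost]

theorem abs_transportCost_le (hτ : ∀ x y, 0 ≤ τ x y) (c : V → V → ℝ) :
    |transportCost τ c| ≤ transportCost τ (fun x y ↦ |c x y|) := by
  refine (abs_sum_le_sum_abs _ _).trans (sum_le_sum fun x _ ↦ ?_)
  refine (abs_sum_le_sum_abs _ _).trans_eq (sum_congr rfl fun y _ ↦ ?_)
  rw [abs_mul, abs_of_nonneg (hτ x y)]

theorem transportCost_abs_le_abs (hτ : ∀ x y, 0 ≤ τ x y) {c : V → V → ℝ}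
    (hc : (∀ x y, 0 < τ x y → 0 ≤ c x y) ∨ (∀ x y, 0 < τ x y → c x y ≤ 0)) :
    transportCost τ (fun x y ↦ |c x y|) ≤ |transportCost τ c| := by
  rcases hc with hc | hc
  · rw [transportCost_congr_of_pos hτ fun x y h ↦ abs_of_nonneg (hc x y h)]
    exact le_abs_self _
  · rw [transportCost_congr_of_pos hτ fun x y h ↦ abs_of_nonpos (hc x y h), transportCost_neg]
    exact neg_le_abs _

theorem IsPlan.transportCost_sub (hτ : IsPlan μ ν τ) (f g : V → ℝ) :
    transportCost τ (fun x y ↦ f x - g y) = ∑ x, μ x * f x - ∑ y, ν y * g y := by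
  simp only [transportCost, mul_sub, sum_sub_distrib]
  rw [sum_comm (f := fun x y ↦ τ x y * g y)]
  simp only [← sum_mul, hτ.2.1, hτ.2.2]

theorem subMass_eq_sum_mul_indicator (parent : V → V) (μ : V → ℝ) (v : V) :
    subMass parent μ v = ∑ x, μ x * (subtree parent v).indicator 1 x := by
  simp only [subMass, Set.indicator_apply, subtree, Set.mem_ofPred_eq, Pi.one_apply, mul_ite,
    mul_one, mul_zero]

theorem IsPlan.transportCost_subtreeCut (hτ : IsPlan μ ν τ) (parent : V → V) (v : V) :
    transportCost τ (subtreeCut parent v) = subMass parent μ v - subMass parent ν v := by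
  rw [subMass_eq_sum_mul_indicator, subMass_eq_sum_mul_indicator]
  exact hτ.transportCost_sub _ _

end TransportCost

/-- Reroutes `ε` of the mass sent `x → y` and `x' → y'` to `x → y'` and `x' → y`. -/
def exchange (τ : V → V → ℝ) (ε : ℝ) (x y x' y' : V) : V → V → ℝ :=
  fun a b ↦ τ a b +
    ε * ((Pi.single x 1 - Pi.single x' 1 : V → ℝ) a * (Pi.single y' 1 - Pi.single y 1 : V → ℝ) b)

section Exchange

variable {μ ν : V → ℝ} {τ : V → V → ℝ} {ε : ℝ} {x y x' y' : V}

theorem IsPlan.exchange (hτ : IsPlan μ ν τ) (hx : x ≠ x') (hy : y ≠ y') (hε : 0 ≤ ε)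
    (hxy : ε ≤ τ x y) (hx'y' : ε ≤ τ x' y') : IsPlan μ ν (exchange τ ε x y x' y') := by
  refine ⟨fun a b ↦ ?_, fun a ↦ ?_, fun b ↦ ?_⟩
  · have := hτ.1 a b
    by_cases a = x <;> by_cases a = x' <;> by_cases b = y <;> by_cases b = y' <;>
      simp_all [_root_.exchange] <;> nlinarith
  · simp [_root_.exchange, sum_add_distrib, hτ.2.1, ← mul_sum, sum_sub_distrib]
  · simp [_root_.exchange, sum_add_distrib, hτ.2.2, ← sum_mul, ← mul_sum, sum_sub_distrib]

theorem transportCost_exchange (c : V → V → ℝ) :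
    transportCost (exchange τ ε x y x' y') c =
      transportCost τ c + ε * (c x y' + c x' y - c x y - c x' y') := by
  simp only [transportCost, exchange, Pi.sub_apply, Pi.single_apply, mul_sub, mul_ite, mul_one,
    mul_zero, add_mul, sub_mul, ite_mul, zero_mul, sum_add_distrib, sum_sub_distrib, sum_ite_eq',
    mem_univ, ↓reduceIte, add_right_inj]
  ring

end Exchange

section Existence

variable {μ ν : V → ℝ}

theorem exists_isPlan (hμ : ∀ v, 0 ≤ μ v) (hν : ∀ v, 0 ≤ ν v)
    (hmass : ∑ v, μ v = ∑ v, ν v) : ∃ τ, IsPlan μ ν τ := by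
  set M := ∑ v, μ v
  rcases eq_or_ne M 0 with h | h
  · have hμ0 := (sum_eq_zero_iff_of_nonneg fun i _ ↦ hμ i).mp h
    have hν0 := (sum_eq_zero_iff_of_nonneg fun i _ ↦ hν i).mp (hmass ▸ h)
    exact ⟨0, fun _ _ ↦ le_rfl, fun a ↦ by simp [hμ0 a], fun b ↦ by simp [hν0 b]⟩
  · refine ⟨fun a b ↦ μ a * ν b / M, fun a b ↦ ?_, fun a ↦ ?_, fun b ↦ ?_⟩
    · exact div_nonneg (mul_nonneg (hμ a) (hν b)) (sum_nonneg fun i _ ↦ hμ i)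
    · rw [← sum_div, ← mul_sum, ← hmass, mul_div_cancel_right₀ _ h]
    · rw [← sum_div, ← sum_mul, mul_div_cancel_left₀ _ h]

theorem isCompact_setOf_isPlan : IsCompact {τ | IsPlan μ ν τ} := by
  have hclosed : IsClosed {τ | IsPlan μ ν τ} := by
    simp only [IsPlan, Set.ofPred_and, Set.ofPred_forall]
    refine .inter (isClosed_iInter fun x ↦ isClosed_iInter fun y ↦ isClosed_le (by fun_prop)
      (by fun_prop)) (.inter (isClosed_iInter fun x ↦ isClosed_eq (by fun_prop) (by fun_prop))
      (isClosed_iInter fun y ↦ isClosed_eq (by fun_prop) (by fun_prop)))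
  refine (isCompact_Icc (a := 0) (b := fun a _ ↦ μ a)).of_isClosed_subset hclosed
    fun τ hτ ↦ ⟨hτ.1, fun a b ↦ ?_⟩
  calc τ a b ≤ ∑ y, τ a y := single_le_sum (fun y _ ↦ hτ.1 a y) (mem_univ b)
    _ = μ a := hτ.2.1 a

theorem exists_isPlan_isMinOn (c : V → V → ℝ) (hμ : ∀ v, 0 ≤ μ v) (hν : ∀ v, 0 ≤ ν v)
    (hmass : ∑ v, μ v = ∑ v, ν v) :
    ∃ τ₀, IsPlan μ ν τ₀ ∧ IsMinOn (fun τ ↦ transportCost τ c) {τ | IsPlan μ ν τ} τ₀ :=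
  isCompact_setOf_isPlan.exists_isMinOn (exists_isPlan hμ hν hmass)
    (by unfold transportCost; fun_prop)

end Existence

section Optimality

variable {root : V} {parent : V → V} {w : V → ℝ} {μ ν : V → ℝ} {τ : V → V → ℝ}

theorem zero_lt_subtreeCut_iff {v x y : V} :
    0 < subtreeCut parent v x y ↔ x ∈ subtree parent v ∧ y ∉ subtree parent v := by
  by_cases hx : x ∈ subtree parent v <;> by_cases hy : y ∈ subtree parent v <;>
    simp [subtreeCut, hx, hy]

theorem subtreeCut_neg_iff {v x y : V} :
    subtreeCut parent v x y < 0 ↔ x ∉ subtree parent v ∧ y ∈ subtree parent v := by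
  by_cases hx : x ∈ subtree parent v <;> by_cases hy : y ∈ subtree parent v <;>
    simp [subtreeCut, hx, hy]

theorem IsPlan.sum_le_transportCost_treeDist (hw : ∀ v, 0 ≤ w v) (hτ : IsPlan μ ν τ) :
    ∑ v ∈ univ.erase root, w v * |subMass parent μ v - subMass parent ν v| ≤
      transportCost τ (treeDist root parent w) := by
  rw [transportCost_treeDist]
  refine sum_le_sum fun v _ ↦ mul_le_mul_of_nonneg_left ?_ (hw v)
  rw [← hτ.transportCost_subtreeCut]
  exact abs_transportCost_le hτ.1 _

theorem IsPlan.exists_transportCost_treeDist_lt (hw : ∀ v, 0 ≤ w v) (hτ : IsPlan μ ν τ)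
    {v x y x' y' : V} (hv : v ∈ univ.erase root) (hwv : 0 < w v)
    (hx : x ∈ subtree parent v) (hy' : y' ∈ subtree parent v)
    (hx' : x' ∉ subtree parent v) (hy : y ∉ subtree parent v)
    (hxy : 0 < τ x y) (hx'y' : 0 < τ x' y') :
    ∃ τ', IsPlan μ ν τ' ∧
      transportCost τ' (treeDist root parent w) < transportCost τ (treeDist root parent w) := by
  have hxx' : x ≠ x' := by rintro rfl; exact hx' hx
  have hyy' : y ≠ y' := by rintro rfl; exact hy hy'
  have hε : 0 < min (τ x y) (τ x' y') := lt_min hxy hx'y'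
  refine ⟨_root_.exchange τ (min (τ x y) (τ x' y')) x y x' y',
    hτ.exchange hxx' hyy' hε.le (min_le_left _ _) (min_le_right _ _), ?_⟩
  rw [transportCost_exchange]
  nlinarith [treeDist_add_treeDist_add_le hw hv hx hy' hx' hy]

theorem IsMinOn.transportCost_abs_subtreeCut_le (hw : ∀ v, 0 ≤ w v) (hτ : IsPlan μ ν τ)
    (hmin : IsMinOn (fun τ ↦ transportCost τ (treeDist root parent w)) {τ | IsPlan μ ν τ} τ)
    {v : V} (hv : v ∈ univ.erase root) (hwv : 0 < w v) :
    transportCost τ (fun x y ↦ |subtreeCut parent v x y|) ≤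
      |subMass parent μ v - subMass parent ν v| := by
  rw [← hτ.transportCost_subtreeCut]
  refine transportCost_abs_le_abs hτ.1 ?_
  by_contra! h
  obtain ⟨⟨x', y', hx'y', hneg⟩, ⟨x, y, hxy, hpos⟩⟩ := h
  obtain ⟨hx, hy⟩ := zero_lt_subtreeCut_iff.mp hpos
  obtain ⟨hx', hy'⟩ := subtreeCut_neg_iff.mp hneg
  obtain ⟨τ', hτ', hlt⟩ := hτ.exists_transportCost_treeDist_lt hw hv hwv hx hy' hx' hy hxy hx'y'
  exact (hmin hτ').not_gt hlt

end Optimality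

theorem greedy_flow_tree_OT_general (root : V) (parent : V → V)
    (w : V → ℝ) (hw : ∀ v, 0 ≤ w v)
    (μ ν : V → ℝ) (hμ : ∀ v, 0 ≤ μ v) (hν : ∀ v, 0 ≤ ν v)
    (hmass : ∑ v, μ v = ∑ v, ν v) :
    (∃ τ : V → V → ℝ, IsPlan μ ν τ ∧
      (∑ x, ∑ y, τ x y * treeDist root parent w x y) =
        ∑ v ∈ Finset.univ.erase root,
          w v * |subMass parent μ v - subMass parent ν v|) ∧
    treeOT root parent w μ ν =
      ∑ v ∈ Finset.univ.erase root,
        w v * |subMass parent μ v - subMass parent ν v| := by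
  obtain ⟨τ₀, hτ₀, hmin⟩ := exists_isPlan_isMinOn (treeDist root parent w) hμ hν hmass
  have hcost : transportCost τ₀ (treeDist root parent w) =
      ∑ v ∈ univ.erase root, w v * |subMass parent μ v - subMass parent ν v| := by
    refine le_antisymm ?_ (hτ₀.sum_le_transportCost_treeDist hw)
    rw [transportCost_treeDist]
    refine sum_le_sum fun v hv ↦ ?_
    rcases (hw v).eq_or_lt with hwv | hwv
    · simp [← hwv]
    · exact mul_le_mul_of_nonneg_left (hmin.transportCost_abs_subtreeCut_le hw hτ₀ hv hwv) hwv.le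
  refine ⟨⟨τ₀, hτ₀, hcost⟩, IsLeast.csInf_eq ⟨⟨τ₀, hτ₀, hcost⟩, ?_⟩⟩
  rintro _ ⟨τ, hτ, rfl⟩
  exact hτ.sum_le_transportCost_treeDist hw

/-- The greedy flow on a weighted rooted tree achieves cost
`Σ_v w(e_v)·|μ(subtree v) - ν(subtree v)|`, and this equals the optimal transport cost
between `μ` and `ν` under the tree metric `d_T`: i.e. there is a transport plan of
exactly this cost, and this quantity is the optimal transport cost. -/
theorem greedy_flow_tree_OT (root : V) (parent : V → V)
    (hroot : parent root = root) (hreach : ∀ v, ∃ k, parent^[k] v = root)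
    (w : V → ℝ) (hw : ∀ v, 0 ≤ w v)
    (μ ν : V → ℝ) (hμ : ∀ v, 0 ≤ μ v) (hν : ∀ v, 0 ≤ ν v)
    (hμsupp : ∀ v, μ v ≠ 0 → IsLeaf parent v) (hνsupp : ∀ v, ν v ≠ 0 → IsLeaf parent v)
    (hmass : ∑ v, μ v = ∑ v, ν v) :
    (∃ τ : V → V → ℝ, IsPlan μ ν τ ∧
      (∑ x, ∑ y, τ x y * treeDist root parent w x y) =
        ∑ v ∈ Finset.univ.erase root,
          w v * |subMass parent μ v - subMass parent ν v|) ∧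
    treeOT root parent w μ ν =
      ∑ v ∈ Finset.univ.erase root,
        w v * |subMass parent μ v - subMass parent ν v| :=
  greedy_flow_tree_OT_general root parent w hw μ ν hμ hν hmass
end
end
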